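/- Let u be an infinite balanced word over a 2-letter alphabet obtained as a Sturmian word, and suppose x is obtained from u by Hubert's construction with y = (01)^ω and y' = 2^ω over the alphabet {0,1,2}. If x is cube-free, then for all sufficiently large k the partial quotients of the slope of u satisfy d_k = 2. -/

import Mathlib

/-!
Write `s = s_{n+2}` and `e = d_{n+3}`. Consecutive standard words almost commute: `s_{n+1} s_{n+2}`
and `s_{n+2} s_{n+1}` differ only in their last two letters. Hence the factor
`s_{n+2} s_{n+3} s_{n+2} = s ^ (e + 1) · s_{n+1} s_{n+2}` of the characteristic word `c` begins with
`s ^ (e + 2)` once `|s_{n+1}| ≥ 2`.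

On a stretch of `c` with period `p`, each period advances the parity counter of Hubert's
substitution by the number of `0`s in one period. The image therefore has period `p` when that
number is even, and period `2p` in any case. Cube-freeness thus makes `|s|_0` odd and forces
`(e + 2)|s| < 6|s|`, i.e. `e ≤ 3`. Finally `|s_{k+2}|_0 = d_{k+2} |s_{k+1}|_0 + |s_k|_0` with all
three counts odd makes `d_{k+2}` even, hence equal to `2`.
-/

/-- Standard words associated to the continued fraction `[0; d 1, d 2, ...]`. -/
def stdWord (d : ℕ → ℕ) : ℕ → List ℕ
  | 0 => [0]
  | 1 => List.replicate (d 1 - 1) 0 ++ [1]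
  | (n+2) => (List.replicate (d (n+2)) (stdWord d (n+1))).flatten ++ stdWord d n

/-- The characteristic Sturmian word of slope `[0; d 1, d 2, ...]`
(the limit of the standard words). -/
def charWord (d : ℕ → ℕ) (n : ℕ) : ℕ := (stdWord d (n+1)).getD n 0

/-- Number of occurrences of the letter `a` among `x 0, ..., x (n-1)`. -/
def countBelow (x : ℕ → ℕ) (a n : ℕ) : ℕ :=
  ((Finset.range n).filter fun j => x j = a).card

/-- `p` is a period of the finite word `w`. -/
def hasPeriod {α : Type*} (w : List α) (p : ℕ) : Prop :=
  0 < p ∧ ∀ i : ℕ, i + p < w.length → w[i]? = w[i + p]?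

/-- The finite word `u` occurs in the infinite word `x` at position `i`. -/
def OccursAt (u : List ℕ) (x : ℕ → ℕ) (i : ℕ) : Prop :=
  u = (List.range u.length).map fun j => x (i + j)

/-- `u` is a factor of the infinite word `x`. -/
def IsFactorI (u : List ℕ) (x : ℕ → ℕ) : Prop :=
  ∃ i : ℕ, OccursAt u x i

section WordPow

variable {α : Type*}

def wordPow (u : List α) (k : ℕ) : List α := (List.replicate k u).flatten

@[simp] lemma wordPow_zero (u : List α) : wordPow u 0 = [] := rfl

lemma wordPow_succ (u : List α) (k : ℕ) : wordPow u (k + 1) = u ++ wordPow u k := rfl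

lemma wordPow_succ' (u : List α) (k : ℕ) : wordPow u (k + 1) = wordPow u k ++ u := by
  simp [wordPow, List.replicate_succ']

@[simp] lemma length_wordPow (u : List α) (k : ℕ) : (wordPow u k).length = k * u.length := by
  induction k with
  | zero => simp
  | succ k ih => rw [wordPow_succ, List.length_append, ih]; ring

lemma count_wordPow [BEq α] (a : α) (u : List α) (k : ℕ) :
    (wordPow u k).count a = k * u.count a := by
  induction k with
  | zero => simp
  | succ k ih => rw [wordPow_succ, List.count_append, ih]; ring

lemma hasPeriod_wordPow {u : List α} (hu : u ≠ []) (k : ℕ) :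
    hasPeriod (wordPow u k) u.length := by
  refine ⟨List.length_pos_of_ne_nil hu, fun j hj => ?_⟩
  obtain ⟨k, rfl⟩ : ∃ k', k = k' + 1 :=
    Nat.exists_eq_succ_of_ne_zero (by rintro rfl; simp at hj)
  have hj' : j < (wordPow u k).length := by simp only [length_wordPow] at hj ⊢; linarith
  conv_lhs => rw [wordPow_succ', List.getElem?_append_left hj']
  rw [wordPow_succ, List.getElem?_append_right (by omega), Nat.add_sub_cancel]

lemma prefix_wordPow_append {u v : List α} (hv : v <+: u) (k : ℕ) : v <+: wordPow u k ++ v := by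
  cases k with
  | zero => exact List.prefix_refl v
  | succ k => rw [wordPow_succ, List.append_assoc]; exact hv.trans (List.prefix_append _ _)

lemma append_prefix_wordPow_append {u v : List α} (hv : v <+: u) {k : ℕ} (hk : 1 ≤ k) :
    u ++ v <+: wordPow u k ++ v := by
  obtain ⟨k, rfl⟩ := Nat.exists_eq_add_of_le' hk
  rw [wordPow_succ, List.append_assoc, List.prefix_append_right_inj]
  exact prefix_wordPow_append hv k

end WordPow

section Occurrences

variable {u v : List ℕ} {f : ℕ → ℕ} {i : ℕ}

lemma occursAt_iff : OccursAt u f i ↔ ∀ j < u.length, u[j]? = some (f (i + j)) := by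
  constructor
  · intro h j hj
    rw [h, List.getElem?_map, List.getElem?_range hj, Option.map_some]
  · intro h
    refine List.ext_getElem? fun j => ?_
    rcases lt_or_ge j u.length with hj | hj
    · rw [h j hj, List.getElem?_map, List.getElem?_range hj, Option.map_some]
    · rw [List.getElem?_eq_none hj, List.getElem?_eq_none (by simpa using hj)]

lemma OccursAt.of_prefix (h : OccursAt v f i) (huv : u <+: v) : OccursAt u f i := by
  obtain ⟨t, rfl⟩ := huv
  rw [occursAt_iff] at h ⊢
  intro j hj
  rw [← h j (by simp; omega), List.getElem?_append_left hj]

lemma OccursAt.right (h : OccursAt (u ++ v) f i) : OccursAt v f (i + u.length) := by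
  rw [occursAt_iff] at h ⊢
  intro j hj
  rw [add_assoc, ← h (u.length + j) (by simp; omega), List.getElem?_append_right (by omega),
    Nat.add_sub_cancel_left]

lemma OccursAt.count_eq (h : OccursAt u f i) (a : ℕ) :
    Nat.count (fun k => f (i + k) = a) u.length = u.count a := by
  induction u generalizing i with
  | nil => simp
  | cons b u ih =>
    rw [occursAt_iff] at h
    have hb : f i = b := by simpa using (h 0 (by simp)).symm
    have hu : OccursAt u f (i + 1) := occursAt_iff.mpr fun j hj => by
      rw [add_assoc, add_comm 1 j]; exact h (j + 1) (by simpa using hj)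
    rw [List.length_cons, Nat.count_succ', List.count_cons, ← ih hu]
    simp [hb, add_assoc, add_comm 1]

end Occurrences

def HasPeriodOn (f : ℕ → ℕ) (i L p : ℕ) : Prop :=
  ∀ j, j + p < L → f (i + j) = f (i + j + p)

lemma OccursAt.hasPeriodOn {w : List ℕ} {f : ℕ → ℕ} {i p : ℕ} (h : OccursAt w f i)
    (hw : hasPeriod w p) : HasPeriodOn f i w.length p := by
  intro j hj
  have := hw.2 j hj
  rw [occursAt_iff.mp h j (by omega), occursAt_iff.mp h (j + p) hj, Option.some_inj] at this
  rwa [← add_assoc] at this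

lemma countBelow_eq_count (f : ℕ → ℕ) (a n : ℕ) :
    countBelow f a n = Nat.count (fun k => f k = a) n :=
  (Nat.count_eq_card_filter_range _ n).symm

namespace HasPeriodOn

variable {f : ℕ → ℕ} {i L p : ℕ}

lemma count_shift (h : HasPeriodOn f i L p) (a : ℕ) {j : ℕ} (hj : j + p ≤ L) :
    Nat.count (fun k => f (i + j + k) = a) p = Nat.count (fun k => f (i + k) = a) p := by
  induction j with
  | zero => simp
  | succ j ih =>
    have hshift := (Nat.count_succ (fun k => f (i + j + k) = a) p).symm.trans
      (Nat.count_succ' _ p)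
    simp only [add_zero, ← h j (by omega)] at hshift
    simp only [show ∀ k, i + (j + 1) + k = i + j + (k + 1) from fun k => by ring]
    rw [← ih (by omega)]
    omega

lemma countBelow_add (h : HasPeriodOn f i L p) (a : ℕ) {j : ℕ} (hj : j + p ≤ L) :
    countBelow f a (i + j + p) =
      countBelow f a (i + j) + Nat.count (fun k => f (i + k) = a) p := by
  rw [countBelow_eq_count, countBelow_eq_count, Nat.count_add, h.count_shift a hj]

lemma two_mul (h : HasPeriodOn f i L p) : HasPeriodOn f i L (2 * p) := fun j hj => by
  rw [h j (by omega), show i + j + 2 * p = i + (j + p) + p by ring, ← h (j + p) (by omega),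
    add_assoc]

lemma count_two_mul (h : HasPeriodOn f i L p) (a : ℕ) (hL : 2 * p ≤ L) :
    Nat.count (fun k => f (i + k) = a) (2 * p) = 2 * Nat.count (fun k => f (i + k) = a) p := by
  rw [Nat.two_mul p, Nat.count_add, ← h.count_shift a (j := p) (by omega)]
  simp only [add_assoc]
  ring

end HasPeriodOn

def CubeFree (x : ℕ → ℕ) : Prop :=
  ∀ (w : List ℕ) (p : ℕ), IsFactorI w x → w ≠ [] → hasPeriod w p → w.length < 3 * p

lemma CubeFree.lt_three_mul {x : ℕ → ℕ} {i L p : ℕ} (hx : CubeFree x) (hp : 0 < p)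
    (h : HasPeriodOn x i L p) : L < 3 * p := by
  rcases L.eq_zero_or_pos with rfl | hL
  · omega
  let w := (List.range L).map fun j => x (i + j)
  have hw : w.length = L := by simp [w]
  have hperiod : hasPeriod w p := ⟨hp, fun j hj => by
    simp only [w, List.getElem?_map, List.getElem?_range (by omega : j < L),
      List.getElem?_range (by omega : j + p < L), Option.map_some, h j (by omega), add_assoc]⟩
  have hocc : OccursAt w x i := by simp only [OccursAt, hw, w]
  simpa [hw] using hx w p ⟨i, hocc⟩ (List.ne_nil_of_length_pos (hw ▸ hL)) hperiod

-- Hubert's construction with `y = (01)^ω` and `y' = 2^ω`: the `k`-th `0` of `c` becomes `y k`,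
-- every other letter becomes `2`.
def hubertSubst (c : ℕ → ℕ) (n : ℕ) : ℕ := if c n = 0 then countBelow c 0 n % 2 else 2

section Hubert

variable {c : ℕ → ℕ} {i L p : ℕ}

lemma HasPeriodOn.hubertSubst (h : HasPeriodOn c i L p)
    (heven : Even (Nat.count (fun k => c (i + k) = 0) p)) : HasPeriodOn (hubertSubst c) i L p := by
  intro j hj
  simp only [_root_.hubertSubst, ← h j hj, h.countBelow_add 0 (j := j) (by omega)]
  split_ifs
  · rw [Nat.add_mod, Nat.even_iff.mp heven, add_zero, Nat.mod_mod]
  · rfl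

lemma odd_count_of_hasPeriodOn (hx : CubeFree (hubertSubst c)) (hp : 0 < p) (hL : 3 * p ≤ L)
    (h : HasPeriodOn c i L p) : Odd (Nat.count (fun k => c (i + k) = 0) p) := by
  by_contra hodd
  have := hx.lt_three_mul hp (h.hubertSubst (Nat.not_odd_iff_even.mp hodd))
  omega

lemma lt_six_mul_of_hasPeriodOn (hx : CubeFree (hubertSubst c)) (hp : 0 < p)
    (h : HasPeriodOn c i L p) : L < 6 * p := by
  by_contra! hL
  have heven : Even (Nat.count (fun k => c (i + k) = 0) (2 * p)) := by
    rw [h.count_two_mul 0 (by omega)]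
    exact even_two_mul _
  have := hx.lt_three_mul (by omega) (h.two_mul.hubertSubst heven)
  omega

end Hubert

section StandardWords

variable (d : ℕ → ℕ)

lemma stdWord_add_two (n : ℕ) :
    stdWord d (n + 2) = wordPow (stdWord d (n + 1)) (d (n + 2)) ++ stdWord d n := rfl

lemma stdWord_ne_nil : ∀ n, stdWord d n ≠ []
  | 0 => by simp [stdWord]
  | 1 => by simp [stdWord]
  | n + 2 => by simp [stdWord_add_two, stdWord_ne_nil n]

lemma count_stdWord_add_two (a n : ℕ) :
    (stdWord d (n + 2)).count a =
      d (n + 2) * (stdWord d (n + 1)).count a + (stdWord d n).count a := by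
  rw [stdWord_add_two, List.count_append, count_wordPow]

lemma stdWord_near_commute (n : ℕ) : ∃ (w : List ℕ) (a b : ℕ),
    stdWord d (n + 1) ++ stdWord d (n + 2) = w ++ [a, b] ∧
      stdWord d (n + 2) ++ stdWord d (n + 1) = w ++ [b, a] := by
  induction n with
  | zero =>
    refine ⟨wordPow (stdWord d 1) (d 2) ++ List.replicate (d 1 - 1) 0, 1, 0, ?_, ?_⟩
    · rw [stdWord_add_two, ← List.append_assoc, ← wordPow_succ, wordPow_succ']
      simp [stdWord]
    · rw [stdWord_add_two, List.append_assoc]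
      simp [stdWord, ← List.cons_append, ← List.replicate_succ, List.replicate_succ']
  | succ n ih =>
    obtain ⟨w, a, b, h₁, h₂⟩ := ih
    refine ⟨wordPow (stdWord d (n + 2)) (d (n + 3)) ++ w, b, a, ?_, ?_⟩
    · rw [stdWord_add_two d (n + 1), ← List.append_assoc, ← wordPow_succ, wordPow_succ',
        List.append_assoc, h₂, List.append_assoc]
    · rw [stdWord_add_two d (n + 1), List.append_assoc, h₁, List.append_assoc]

lemma stdWord_prefix_append_stdWord (n : ℕ) (h : 2 ≤ (stdWord d (n + 1)).length) :
    stdWord d (n + 2) <+: stdWord d (n + 1) ++ stdWord d (n + 2) := by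
  obtain ⟨w, a, b, h₁, h₂⟩ := stdWord_near_commute d n
  have hlen : (stdWord d (n + 2)).length ≤ w.length := by
    have := congrArg List.length h₂
    simp only [List.length_append, List.length_cons, List.length_nil] at this
    omega
  have hw : stdWord d (n + 2) <+: w :=
    List.prefix_of_prefix_length_le (h₂ ▸ List.prefix_append _ _) (List.prefix_append _ _) hlen
  exact h₁ ▸ hw.trans (List.prefix_append _ _)

variable {d} (hd : ∀ i, 1 ≤ d (i + 1))
include hd

lemma stdWord_prefix_succ (n : ℕ) : stdWord d (n + 1) <+: stdWord d (n + 2) := by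
  obtain ⟨k, hk⟩ := Nat.exists_eq_add_of_le' (hd (n + 1))
  rw [stdWord_add_two, hk, wordPow_succ, List.append_assoc]
  exact List.prefix_append _ _

lemma stdWord_prefix_of_le {m n : ℕ} (h : m ≤ n) : stdWord d (m + 1) <+: stdWord d (n + 1) := by
  induction n, h using Nat.le_induction with
  | base => exact List.prefix_refl _
  | succ n _ ih => exact ih.trans (stdWord_prefix_succ hd n)

lemma lt_length_stdWord (n : ℕ) : n < (stdWord d (n + 1)).length := by
  induction n with
  | zero => exact List.length_pos_of_ne_nil (stdWord_ne_nil d 1)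
  | succ n ih =>
    have hlen := congrArg List.length (stdWord_add_two d n)
    rw [List.length_append, length_wordPow] at hlen
    have := hd (n + 1)
    have := List.length_pos_of_ne_nil (stdWord_ne_nil d n)
    nlinarith

lemma two_le_length_stdWord (n : ℕ) : 2 ≤ (stdWord d (n + 2)).length := by
  have : n + 1 < (stdWord d (n + 2)).length := lt_length_stdWord hd (n + 1)
  omega

lemma stdWord_append_prefix (n : ℕ) :
    stdWord d (n + 2) ++ stdWord d (n + 1) <+: stdWord d (n + 3) :=
  append_prefix_wordPow_append (stdWord_prefix_succ hd n) (hd (n + 2))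

lemma stdWord_append_append_prefix (n : ℕ) :
    stdWord d (n + 3) ++ stdWord d (n + 2) ++ stdWord d (n + 1) <+:
      stdWord d (n + 4) ++ stdWord d (n + 3) := by
  have hn := stdWord_prefix_succ hd
  calc stdWord d (n + 3) ++ stdWord d (n + 2) ++ stdWord d (n + 1)
      <+: wordPow (stdWord d (n + 3)) (d (n + 4)) ++ (stdWord d (n + 2) ++ stdWord d (n + 1)) := by
        rw [List.append_assoc]
        exact append_prefix_wordPow_append (stdWord_append_prefix hd n) (hd (n + 3))
    _ <+: stdWord d (n + 4) ++ stdWord d (n + 3) := by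
        rw [stdWord_add_two d (n + 2), List.append_assoc, List.prefix_append_right_inj,
          List.prefix_append_right_inj]
        exact (hn n).trans (hn (n + 1))

lemma occursAt_charWord_of_prefix {u : List ℕ} {n : ℕ} (hu : u <+: stdWord d (n + 1)) :
    OccursAt u (charWord d) 0 := by
  rw [occursAt_iff]
  intro j hj
  obtain ⟨t, ht⟩ := hu.trans (stdWord_prefix_of_le hd (le_max_left n j))
  obtain ⟨t', ht'⟩ := stdWord_prefix_of_le hd (le_max_right n j)
  have hjlen := lt_length_stdWord hd j
  rw [zero_add, charWord, List.getD_eq_getElem?_getD, List.getElem?_eq_getElem hjlen,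
    Option.getD_some, ← List.getElem?_append_left hj, ht, ← ht', List.getElem?_append_left hjlen]
  simp

lemma occursAt_wordPow_stdWord (n : ℕ) (h : 2 ≤ (stdWord d (n + 1)).length) :
    OccursAt (wordPow (stdWord d (n + 2)) (d (n + 3) + 2)) (charWord d)
      (d (n + 4) * (stdWord d (n + 3)).length) := by
  -- `c` begins with `s_{n+4} s_{n+3} s_{n+2} = s_{n+3} ^ d_{n+4} · s_{n+2} s_{n+3} s_{n+2}`.
  have hpre : stdWord d (n + 4) ++ stdWord d (n + 3) ++ stdWord d (n + 2) <+: stdWord d (n + 6) :=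
    (stdWord_append_append_prefix hd (n + 1)).trans (stdWord_append_prefix hd (n + 3))
  have hocc := occursAt_charWord_of_prefix hd hpre
  rw [stdWord_add_two d (n + 2), List.append_assoc, List.append_assoc] at hocc
  have hmid := hocc.right
  rw [zero_add, length_wordPow] at hmid
  refine hmid.of_prefix ?_
  rw [stdWord_add_two d (n + 1), wordPow_succ', wordPow_succ, List.append_assoc, List.append_assoc,
    List.prefix_append_right_inj, List.prefix_append_right_inj]
  exact stdWord_prefix_append_stdWord d n h

end StandardWords

section CubeFreeHubert

variable {d : ℕ → ℕ} (hd : ∀ i, 1 ≤ d (i + 1)) (hx : CubeFree (hubertSubst (charWord d)))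
include hd hx

lemma odd_count_zero_stdWord (n : ℕ) (h : 2 ≤ (stdWord d (n + 1)).length) :
    Odd ((stdWord d (n + 2)).count 0) := by
  have hocc := occursAt_wordPow_stdWord hd n h
  have hperiod := hocc.hasPeriodOn (hasPeriod_wordPow (stdWord_ne_nil d (n + 2)) _)
  rw [length_wordPow] at hperiod
  rw [← (hocc.of_prefix (List.prefix_append _ _)).count_eq]
  exact odd_count_of_hasPeriodOn hx (List.length_pos_of_ne_nil (stdWord_ne_nil d (n + 2)))
    (Nat.mul_le_mul_right _ (by have : 1 ≤ d (n + 3) := hd (n + 2); omega)) hperiod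

lemma le_three_of_cubeFree (n : ℕ) (h : 2 ≤ (stdWord d (n + 1)).length) : d (n + 3) ≤ 3 := by
  have hocc := occursAt_wordPow_stdWord hd n h
  have hperiod := hocc.hasPeriodOn (hasPeriod_wordPow (stdWord_ne_nil d (n + 2)) _)
  rw [length_wordPow] at hperiod
  have hpos := List.length_pos_of_ne_nil (stdWord_ne_nil d (n + 2))
  have := lt_six_mul_of_hasPeriodOn hx hpos hperiod
  nlinarith

end CubeFreeHubert

theorem cubefree_forces_partial_quotients_two (d : ℕ → ℕ)
    (hd : ∀ i : ℕ, 1 ≤ d (i + 1)) (x : ℕ → ℕ)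
    (hx : ∀ n : ℕ, x n = if charWord d n = 0 then countBelow (charWord d) 0 n % 2 else 2)
    (hcube : ∀ (w : List ℕ) (pp : ℕ), IsFactorI w x → w ≠ [] → hasPeriod w pp →
      w.length < 3 * pp) :
    ∃ N : ℕ, ∀ k : ℕ, N ≤ k → d k = 2 := by
  obtain rfl : x = hubertSubst (charWord d) := funext hx
  have hodd (n : ℕ) : Odd ((stdWord d (n + 3)).count 0) :=
    odd_count_zero_stdWord hd hcube (n + 1) (two_le_length_stdWord hd n)
  refine ⟨5, fun k hk => ?_⟩
  obtain ⟨n, rfl⟩ := Nat.exists_eq_add_of_le' hk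
  have heven : Even (d (n + 5)) := by
    have h5 : Odd ((stdWord d (n + 5)).count 0) := hodd (n + 2)
    have h4 : Odd ((stdWord d (n + 4)).count 0) := hodd (n + 1)
    have hrec : (stdWord d (n + 5)).count 0
        = d (n + 5) * (stdWord d (n + 4)).count 0 + (stdWord d (n + 3)).count 0 :=
      count_stdWord_add_two d 0 (n + 3)
    rw [hrec] at h5
    simpa [Nat.odd_add, Nat.odd_mul, h4, Nat.not_even_iff_odd.mpr (hodd n)] using h5
  have hle : d (n + 5) ≤ 3 :=
    le_three_of_cubeFree hd hcube (n + 2) (two_le_length_stdWord hd (n + 1))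
  have hge : 1 ≤ d (n + 5) := hd (n + 4)
  obtain ⟨r, hr⟩ := heven
  omega
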